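/- arXiv:1903.08588 — 2 statements merged into one kernel-verified Lean document; each statement's English description precedes it below -/
import Mathlib

section
/- Let s_1,…,s_K ∈ ℝ and α_1,…,α_K > 0, and c̄ > 0. Define the consensus set C(s) = {k : (s - s_k)²/α_k² ≤ c̄²}. Then the map s ↦ C(s) takes at most 2K - 1 distinct non-empty values as s ranges over ℝ. -/
theorem consensus_aux (K : ℕ) (hK : 0 < K) (a b : Fin K → ℝ) :
    Set.ncard {A : Set (Fin K) | A.Nonempty ∧ ∃ s : ℝ, A = {k | a k ≤ s ∧ s ≤ b k}} ≤
      2 * K - 1 := by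
  classical
  haveI : NeZero K := ⟨hK.ne'⟩
  set C : ℝ → Set (Fin K) := fun s => {k | a k ≤ s ∧ s ≤ b k} with hCdef
  set V : Set (Set (Fin K)) := {A | A.Nonempty ∧ ∃ s : ℝ, A = C s} with hVdef
  set S : Set (Fin K) → Set ℝ := fun A => {s | C s = A} with hSdef
  set m : Set (Fin K) → ℝ := fun A => sInf (S A) with hmdef
  have hSne : ∀ A ∈ V, (S A).Nonempty := by
    rintro A ⟨-, s, rfl⟩; exact ⟨s, rfl⟩
  have hSbdd : ∀ A ∈ V, BddBelow (S A) := by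
    rintro A ⟨⟨j, hj⟩, s, hs⟩
    refine ⟨a j, fun t ht => ?_⟩
    have hjt : j ∈ C t := by rw [show C t = A from ht]; exact hj
    exact hjt.1
  have hmle : ∀ A ∈ V, ∀ s ∈ S A, m A ≤ s := fun A hA s hs => csInf_le (hSbdd A hA) hs
  have hnear : ∀ A ∈ V, ∀ ε : ℝ, 0 < ε → ∃ s ∈ S A, s < m A + ε := by
    intro A hA ε hε
    exact Real.lt_sInf_add_pos (hSne A hA) hε
  -- gap lemma: around any point x, endpoints are either equal to x or at distance ≥ δ
  have gap : ∀ x : ℝ, ∃ δ : ℝ, 0 < δ ∧ ∀ k : Fin K,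
      (a k = x ∨ δ ≤ |a k - x|) ∧ (b k = x ∨ δ ≤ |b k - x|) := by
    intro x
    set T : Finset ℝ :=
      ((Finset.univ.image fun k => |a k - x|) ∪ (Finset.univ.image fun k => |b k - x|)).filter
        (fun t => 0 < t) with hT
    have hmemTa : ∀ k : Fin K, a k ≠ x → |a k - x| ∈ T := by
      intro k h
      rw [hT, Finset.mem_filter]
      exact ⟨Finset.mem_union_left _ (Finset.mem_image.mpr ⟨k, Finset.mem_univ k, rfl⟩),
        abs_pos.mpr (sub_ne_zero.mpr h)⟩
    have hmemTb : ∀ k : Fin K, b k ≠ x → |b k - x| ∈ T := by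
      intro k h
      rw [hT, Finset.mem_filter]
      exact ⟨Finset.mem_union_right _ (Finset.mem_image.mpr ⟨k, Finset.mem_univ k, rfl⟩),
        abs_pos.mpr (sub_ne_zero.mpr h)⟩
    by_cases hTne : T.Nonempty
    · refine ⟨T.min' hTne, (Finset.mem_filter.mp (T.min'_mem hTne)).2, fun k => ?_⟩
      constructor
      · rcases eq_or_ne (a k) x with h | h
        · exact Or.inl h
        · exact Or.inr (T.min'_le _ (hmemTa k h))
      · rcases eq_or_ne (b k) x with h | h
        · exact Or.inl h
        · exact Or.inr (T.min'_le _ (hmemTb k h))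
    · refine ⟨1, one_pos, fun k => ?_⟩
      constructor
      · rcases eq_or_ne (a k) x with h | h
        · exact Or.inl h
        · exact absurd ⟨_, hmemTa k h⟩ hTne
      · rcases eq_or_ne (b k) x with h | h
        · exact Or.inl h
        · exact absurd ⟨_, hmemTb k h⟩ hTne
  -- if the infimum is attained, it is a left endpoint
  have exist_left : ∀ A ∈ V, m A ∈ S A → ∃ k, a k = m A := by
    intro A hA hm
    obtain ⟨δ, hδ, hgap⟩ := gap (m A)
    have hCm : C (m A) = A := hm
    have hsA : (m A - δ / 2) ∉ S A := by
      intro h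
      have := hmle A hA _ h
      linarith
    have hsub : C (m A - δ / 2) ⊆ A := by
      rintro k ⟨hk1, hk2⟩
      rw [← hCm]
      refine ⟨by linarith, ?_⟩
      rcases (hgap k).2 with h | h
      · exact le_of_eq h.symm
      · rcases le_total (m A) (b k) with hle | hle
        · exact hle
        · exfalso
          rw [abs_of_nonpos (by linarith)] at h
          linarith
    have hne : C (m A - δ / 2) ≠ A := fun h => hsA h
    obtain ⟨k, hkA, hks⟩ : ∃ k, k ∈ A ∧ k ∉ C (m A - δ / 2) := by
      by_contra h
      push_neg at h
      exact hne (Set.Subset.antisymm hsub h)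
    have hkm : a k ≤ m A ∧ m A ≤ b k := by rw [← hCm] at hkA; exact hkA
    refine ⟨k, ?_⟩
    rcases (hgap k).1 with h | h
    · exact h
    · exfalso
      apply hks
      constructor
      · rw [abs_of_nonpos (by linarith [hkm.1])] at h
        linarith [hkm.1]
      · linarith [hkm.2]
  -- if the infimum is not attained, it is a right endpoint, and not the maximal one
  have exist_right : ∀ A ∈ V, m A ∉ S A → (∃ k, b k = m A) ∧ (∃ j, m A < b j) := by
    intro A hA hm
    obtain ⟨δ, hδ, hgap⟩ := gap (m A)
    obtain ⟨s, hsS, hslt⟩ := hnear A hA δ hδ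
    have hms : m A < s := lt_of_le_of_ne (hmle A hA s hsS) fun h => hm (h ▸ hsS)
    have hCs : C s = A := hsS
    obtain ⟨j, hj⟩ := hA.1
    have hjs : j ∈ C s := by rw [hCs]; exact hj
    have hsub : A ⊆ C (m A) := by
      intro k hk
      rw [← hCs] at hk
      obtain ⟨hk1, hk2⟩ := hk
      constructor
      · rcases (hgap k).1 with h | h
        · exact le_of_eq h
        · rcases le_total (a k) (m A) with hle | hle
          · exact hle
          · exfalso
            rw [abs_of_nonneg (by linarith)] at h
            linarith
      · rcases (hgap k).2 with h | h
        · exfalso; rw [h] at hk2; linarith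
        · rcases le_total (m A) (b k) with hle | hle
          · exact hle
          · exfalso
            rw [abs_of_nonpos (by linarith)] at h
            linarith
    have hne : C (m A) ≠ A := fun h => hm h
    obtain ⟨k, hkC, hkA⟩ : ∃ k, k ∈ C (m A) ∧ k ∉ A := by
      by_contra h
      push_neg at h
      exact hne (Set.Subset.antisymm h hsub)
    obtain ⟨hk1, hk2⟩ := hkC
    refine ⟨⟨k, ?_⟩, ⟨j, lt_of_lt_of_le hms hjs.2⟩⟩
    rcases (hgap k).2 with h | h
    · exact h
    · exfalso
      apply hkA
      rw [← hCs]
      refine ⟨by linarith, ?_⟩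
      rw [abs_of_nonneg (by linarith)] at h
      linarith
  -- two non-attained values with the same infimum coincide
  have uniq_right : ∀ A ∈ V, ∀ A' ∈ V, m A = m A' → m A ∉ S A → m A' ∉ S A' → A = A' := by
    intro A hA A' hA' hmm' hm hm'
    obtain ⟨δ, hδ, hgap⟩ := gap (m A)
    obtain ⟨s, hsS, hslt⟩ := hnear A hA δ hδ
    obtain ⟨s', hsS', hslt'⟩ := hnear A' hA' δ hδ
    rw [← hmm'] at hslt'
    have hms : m A < s := lt_of_le_of_ne (hmle A hA s hsS) fun h => hm (h ▸ hsS)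
    have hms' : m A < s' := by
      have h1 := hmle A' hA' s' hsS'
      rw [← hmm'] at h1
      exact lt_of_le_of_ne h1 fun h => hm' (by rw [← hmm']; exact h ▸ hsS')
    have hCeq : C s = C s' := by
      ext k
      have ha : a k ≤ s ↔ a k ≤ s' := by
        rcases (hgap k).1 with h | h
        · constructor <;> intro _ <;> linarith
        · rcases le_total (a k) (m A) with hle | hle
          · constructor <;> intro _ <;> linarith
          · rw [abs_of_nonneg (by linarith)] at h
            constructor <;> intro h2 <;> linarith
      have hb : s ≤ b k ↔ s' ≤ b k := by
        rcases (hgap k).2 with h | h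
        · constructor <;> intro h2 <;> linarith [h.le, h.ge]
        · rcases le_total (m A) (b k) with hle | hle
          · rw [abs_of_nonneg (by linarith)] at h
            constructor <;> intro _ <;> linarith
          · constructor <;> intro h2 <;> linarith
      show (a k ≤ s ∧ s ≤ b k) ↔ (a k ≤ s' ∧ s' ≤ b k)
      rw [ha, hb]
    have h1 : C s = A := hsS
    have h2 : C s' = A' := hsS'
    rw [← h1, ← h2, hCeq]
  obtain ⟨k₀, hk₀⟩ := Finite.exists_max b
  set f : Set (Fin K) → Fin K × Bool := fun A =>
    if m A ∈ S A then (Classical.epsilon (fun k => a k = m A), true)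
    else (Classical.epsilon (fun k => b k = m A), false) with hf
  have hinj : Set.InjOn f V := by
    intro A hA A' hA' hEq
    by_cases h1 : m A ∈ S A <;> by_cases h2 : m A' ∈ S A'
    · simp only [hf, if_pos h1, if_pos h2, Prod.mk.injEq] at hEq
      have e1 := Classical.epsilon_spec (exist_left A hA h1)
      have e2 := Classical.epsilon_spec (exist_left A' hA' h2)
      have hm : m A = m A' := by rw [← e1, hEq.1, e2]
      have hA1 : C (m A) = A := h1
      have hA2 : C (m A') = A' := h2
      rw [← hA1, ← hA2, hm]
    · simp only [hf, if_pos h1, if_neg h2, Prod.mk.injEq] at hEq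
      exact absurd hEq.2 (by simp)
    · simp only [hf, if_neg h1, if_pos h2, Prod.mk.injEq] at hEq
      exact absurd hEq.2 (by simp)
    · simp only [hf, if_neg h1, if_neg h2, Prod.mk.injEq] at hEq
      have e1 := Classical.epsilon_spec ((exist_right A hA h1).1)
      have e2 := Classical.epsilon_spec ((exist_right A' hA' h2).1)
      have hm : m A = m A' := by rw [← e1, hEq.1, e2]
      exact uniq_right A hA A' hA' hm h1 h2
  set W : Finset (Fin K × Bool) :=
    ((Finset.univ : Finset (Fin K)) ×ˢ {true}) ∪ ((Finset.univ.erase k₀) ×ˢ {false}) with hW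
  have himg : f '' V ⊆ ↑W := by
    rintro p ⟨A, hA, rfl⟩
    rw [hW]
    simp only [Finset.coe_union, Set.mem_union, Finset.coe_product, Finset.coe_singleton,
      Set.mem_prod, Finset.coe_univ, Set.mem_univ, Set.mem_singleton_iff, Finset.coe_erase,
      Set.mem_diff, Finset.mem_coe, Finset.mem_singleton]
    by_cases h1 : m A ∈ S A
    · left
      simp [hf, if_pos h1]
    · right
      have e1 := Classical.epsilon_spec ((exist_right A hA h1).1)
      obtain ⟨j, hj⟩ := (exist_right A hA h1).2
      have hne : Classical.epsilon (fun k => b k = m A) ≠ k₀ := by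
        intro h
        rw [h] at e1
        have := hk₀ j
        linarith
      simp [hf, if_neg h1, hne]
  calc V.ncard = (f '' V).ncard := (Set.ncard_image_of_injOn hinj).symm
    _ ≤ (↑W : Set (Fin K × Bool)).ncard := Set.ncard_le_ncard himg (W.finite_toSet)
    _ = W.card := Set.ncard_coe_finset W
    _ ≤ 2 * K - 1 := by
        refine le_trans (Finset.card_union_le _ _) ?_
        simp only [Finset.card_product, Finset.card_singleton,
          Finset.card_erase_of_mem (Finset.mem_univ k₀), Finset.card_univ, Fintype.card_fin]
        omega

/-- the map s ↦ consensus set takes at most 2K-1 distinct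
nonempty values. -/
theorem consensus_sets_card (K : ℕ) (sm α : Fin K → ℝ)
    (hα : ∀ k, 0 < α k) (c : ℝ) (hc : 0 < c) :
    Set.ncard {A : Set (Fin K) | A.Nonempty ∧
      ∃ s : ℝ, A = {k | (s - sm k) ^ 2 / (α k) ^ 2 ≤ c ^ 2}} ≤ 2 * K - 1 := by
  rcases Nat.eq_zero_or_pos K with h0 | hK
  · have hempty : {A : Set (Fin K) | A.Nonempty ∧
        ∃ s : ℝ, A = {k | (s - sm k) ^ 2 / (α k) ^ 2 ≤ c ^ 2}} = ∅ := by
      ext A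
      simp only [Set.mem_setOf_eq, Set.mem_empty_iff_false, iff_false, not_and]
      rintro ⟨k, -⟩
      exact absurd k.isLt (by omega)
    rw [hempty, Set.ncard_empty]
    exact Nat.zero_le _
  · have hCset : ∀ s : ℝ, {k : Fin K | (s - sm k) ^ 2 / (α k) ^ 2 ≤ c ^ 2} =
        {k : Fin K | (fun k => sm k - α k * c) k ≤ s ∧ s ≤ (fun k => sm k + α k * c) k} := by
      intro s
      ext k
      simp only [Set.mem_setOf_eq]
      have hαk := hα k
      rw [div_le_iff₀ (by positivity)]
      constructor
      · intro h
        have h2 : (s - sm k) ^ 2 ≤ (α k * c) ^ 2 := by nlinarith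
        have h3 := abs_le_of_sq_le_sq' h2 (by positivity)
        constructor <;> [linarith [h3.1]; linarith [h3.2]]
      · rintro ⟨h1, h2⟩
        have h3 : (s - sm k) ^ 2 ≤ (α k * c) ^ 2 := sq_le_sq' (by linarith) (by linarith)
        nlinarith
    have := consensus_aux K hK (fun k => sm k - α k * c) (fun k => sm k + α k * c)
    simp only [hCset]
    exact this
end

section
/- The truncated least squares objective f(s) = Σ_{k=1}^K min((s - s_k)²/α_k², c̄²) attains its global minimum at a point of the form ŝ_C = (Σ_{k∈C} 1/α_k²)^{-1} Σ_{k∈C} s_k/α_k² for some consensus set C = C(s*) of an optimal s*; that is, the minimum of f equals the minimum over the finitely many candidate values f(ŝ_C) with C ranging over the realizable consensus sets. -/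
/-- Theorem 2: the scalar TLS objective attains its global
minimum at the weighted least-squares estimate of the consensus set of an
optimal point. -/
theorem tls_scale_by_enumeration (K : ℕ) (sm α : Fin K → ℝ)
    (hα : ∀ k, 0 < α k) (c : ℝ) (hc : 0 < c) :
    let f : ℝ → ℝ := fun s => ∑ k, min ((s - sm k) ^ 2 / (α k) ^ 2) (c ^ 2)
    let consensus : ℝ → Finset (Fin K) :=
      fun s => Finset.univ.filter (fun k => (s - sm k) ^ 2 / (α k) ^ 2 ≤ c ^ 2)
    let shat : Finset (Fin K) → ℝ := fun C =>
      (∑ k ∈ C, 1 / (α k) ^ 2)⁻¹ * ∑ k ∈ C, sm k / (α k) ^ 2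
    ∃ sstar : ℝ, (∀ s, f sstar ≤ f s) ∧ f sstar = f (shat (consensus sstar)) := by
  intro f consensus shat
  -- bound on f
  have fbound : ∀ s, f s ≤ ∑ _k : Fin K, c ^ 2 := by
    intro s
    exact Finset.sum_le_sum fun k _ => min_le_right _ _
  -- big radius
  set R : ℝ := (∑ k, (|sm k| + c * α k)) + 1 with hRdef
  have hterm : ∀ k, |sm k| + c * α k ≤ R := by
    intro k
    have h1 : |sm k| + c * α k ≤ ∑ j, (|sm j| + c * α j) :=
      Finset.single_le_sum (f := fun j => |sm j| + c * α j)
        (fun j _ => add_nonneg (abs_nonneg _) (mul_nonneg hc.le (hα j).le))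
        (Finset.mem_univ k)
    linarith
  have hR0 : 0 < R := by
    have : (0:ℝ) ≤ ∑ k, (|sm k| + c * α k) :=
      Finset.sum_nonneg fun k _ => add_nonneg (abs_nonneg _) (mul_nonneg hc.le (hα k).le)
    linarith
  have hcont : Continuous f := by
    apply continuous_finset_sum
    intro k _
    exact Continuous.min (((continuous_id.sub continuous_const).pow 2).div_const _)
      continuous_const
  obtain ⟨sstar, hsmem, hsmin⟩ :=
    (isCompact_Icc (a := -R) (b := R)).exists_isMinOn
      ⟨0, by constructor <;> linarith⟩ hcont.continuousOn
  have hglobal : ∀ s, f sstar ≤ f s := by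
    intro s
    by_cases hs : s ∈ Set.Icc (-R) R
    · exact hsmin hs
    · -- outside: every min equals c^2
      have habs : R < |s| := by
        simp only [Set.mem_Icc, not_and_or, not_le] at hs
        rcases hs with h | h
        · calc R < -s := by linarith
            _ ≤ |s| := neg_le_abs s
        · exact h.trans_le (le_abs_self s)
      have hfs : f s = ∑ _k : Fin K, c ^ 2 := by
        apply Finset.sum_congr rfl
        intro k _
        have h1 : c * α k ≤ |s - sm k| := by
          have h2 := abs_sub_abs_le_abs_sub s (sm k)
          have h3 := hterm k
          linarith
        have h4 : c ^ 2 ≤ (s - sm k) ^ 2 / (α k) ^ 2 := by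
          rw [le_div_iff₀ (pow_pos (hα k) 2)]
          have h5 : (c * α k) ^ 2 ≤ |s - sm k| ^ 2 := by
            have h0 : 0 ≤ c * α k := mul_nonneg hc.le (hα k).le
            nlinarith
          rw [sq_abs] at h5
          nlinarith
        exact min_eq_right h4
      have h0 : f sstar ≤ f 0 := hsmin ⟨by linarith, by linarith⟩
      calc f sstar ≤ f 0 := h0
        _ ≤ ∑ _k : Fin K, c ^ 2 := fbound 0
        _ = f s := hfs.symm
  refine ⟨sstar, hglobal, ?_⟩
  set C : Finset (Fin K) := consensus sstar with hC
  have hmemC : ∀ k, k ∈ C ↔ (sstar - sm k) ^ 2 / (α k) ^ 2 ≤ c ^ 2 := by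
    intro k
    simp [hC, consensus]
  rcases C.eq_empty_or_nonempty with hCe | hCne
  · -- empty consensus set: f sstar = K c^2
    have hfs : f sstar = ∑ _k : Fin K, c ^ 2 := by
      apply Finset.sum_congr rfl
      intro k _
      apply min_eq_right
      have : k ∉ C := by simp [hCe]
      rw [hmemC] at this
      linarith [not_le.mp this]
    exact le_antisymm (hglobal _) (by rw [hfs]; exact fbound _)
  · -- nonempty consensus set
    set A : ℝ := ∑ k ∈ C, 1 / (α k) ^ 2 with hAdef
    set B : ℝ := ∑ k ∈ C, sm k / (α k) ^ 2 with hBdef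
    set D : ℝ := ∑ k ∈ C, (sm k) ^ 2 / (α k) ^ 2 with hDdef
    have hA : 0 < A :=
      Finset.sum_pos (fun k _ => one_div_pos.mpr (pow_pos (hα k) 2)) hCne
    have hshat : shat C = A⁻¹ * B := rfl
    -- expansion of the quadratic
    have expand : ∀ s : ℝ, ∑ k ∈ C, (s - sm k) ^ 2 / (α k) ^ 2
        = A * s ^ 2 - 2 * B * s + D := by
      intro s
      have step : ∀ k ∈ C, (s - sm k) ^ 2 / (α k) ^ 2
          = s ^ 2 * (1 / (α k) ^ 2) - 2 * s * (sm k / (α k) ^ 2)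
            + (sm k) ^ 2 / (α k) ^ 2 := by
        intro k _
        ring
      rw [Finset.sum_congr rfl step, Finset.sum_add_distrib, Finset.sum_sub_distrib,
        ← Finset.mul_sum, ← Finset.mul_sum, hAdef, hBdef, hDdef]
      ring
    -- surrogate g
    set g : ℝ → ℝ := fun s => (∑ k ∈ C, (s - sm k) ^ 2 / (α k) ^ 2)
      + ∑ k ∈ Cᶜ, c ^ 2 with hgdef
    have hfg : ∀ s, f s ≤ g s := by
      intro s
      have hsplit : f s = (∑ k ∈ C, min ((s - sm k) ^ 2 / (α k) ^ 2) (c ^ 2))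
          + ∑ k ∈ Cᶜ, min ((s - sm k) ^ 2 / (α k) ^ 2) (c ^ 2) :=
        (Finset.sum_add_sum_compl C _).symm
      rw [hsplit, hgdef]
      exact add_le_add (Finset.sum_le_sum fun k _ => min_le_left _ _)
        (Finset.sum_le_sum fun k _ => min_le_right _ _)
    have hfgstar : f sstar = g sstar := by
      have hsplit : f sstar = (∑ k ∈ C, min ((sstar - sm k) ^ 2 / (α k) ^ 2) (c ^ 2))
          + ∑ k ∈ Cᶜ, min ((sstar - sm k) ^ 2 / (α k) ^ 2) (c ^ 2) :=
        (Finset.sum_add_sum_compl C _).symm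
      rw [hsplit, hgdef]
      congr 1
      · exact Finset.sum_congr rfl fun k hk => min_eq_left ((hmemC k).mp hk)
      · refine Finset.sum_congr rfl fun k hk => min_eq_right ?_
        have : k ∉ C := Finset.mem_compl.mp hk
        rw [hmemC] at this
        linarith [not_le.mp this]
    have hgmin : g (shat C) ≤ g sstar := by
      rw [hgdef]
      simp only
      rw [expand, expand, hshat]
      have hAne : A ≠ 0 := hA.ne'
      have e1 : A * (A⁻¹ * B) ^ 2 - 2 * B * (A⁻¹ * B) = -(B ^ 2 / A) := by
        field_simp
        ring
      have e2 : A * sstar ^ 2 - 2 * B * sstar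
          = (A * sstar - B) ^ 2 / A - B ^ 2 / A := by
        field_simp
        ring
      have hnn : 0 ≤ (A * sstar - B) ^ 2 / A := div_nonneg (sq_nonneg _) hA.le
      linarith [e1, e2, hnn]
    exact le_antisymm (hglobal _) (by calc f (shat C) ≤ g (shat C) := hfg _
      _ ≤ g sstar := hgmin
      _ = f sstar := hfgstar.symm)
end
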